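/- For d ≥ 5, if a(d) > (2d-4)(2d-3)!! and a(d-1) > (2d-6)(2d-5)!!, and a satisfies the recurrence a(d+1) = (2d+1)!! − ∑_{k=1}^{d}(2d-2k+1)!!·a(k) with a(1)=1, a(2)=2, then a(d+1) < (2d-1)·(2d-1)!!. -/

import Mathlib

/-!
Every term of `∑_{k=1}^{d} (2d-2k+1)!! a(k)` is nonnegative, so the sum is at least its terms for
`k = 1, 2, d-1, d`, namely `(2d-1)!! + 2(2d-3)!! + 3 a(d-1) + a(d)`. The two lower bounds on `a(d)`
and `a(d-1)` push this above `2 (2d-1)!!`, and since `(2d+1)!! = (2d-1)(2d-1)!! + 2 (2d-1)!!`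
the difference `a(d+1)` falls below `(2d-1)(2d-1)!!`.
-/

/-- The double factorial `(2d-1)!! = ∏_{i=1}^d (2i-1)`, with `(-1)!! = oddDF 0 = 1`. -/
def oddDF (d : ℕ) : ℕ := ∏ i ∈ Finset.range d, (2 * i + 1)

open Finset

lemma oddDF_succ (n : ℕ) : oddDF (n + 1) = oddDF n * (2 * n + 1) :=
  prod_range_succ _ _

lemma oddDF_pos (n : ℕ) : 0 < oddDF n :=
  prod_pos fun _ _ => Nat.succ_pos _

lemma Finset.add_add_add_le_sum_Icc_one {M : Type*} [AddCommMonoid M] [PartialOrder M]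
    [CanonicallyOrderedAdd M] (f : ℕ → M) {d : ℕ} (hd : 4 ≤ d) :
    f 1 + f 2 + f (d - 1) + f d ≤ ∑ k ∈ Icc 1 d, f k := by
  have hsub : ({1, 2, d - 1, d} : Finset ℕ) ⊆ Icc 1 d := by
    intro k hk
    simp only [mem_insert, mem_singleton] at hk
    simp only [mem_Icc]
    omega
  calc f 1 + f 2 + f (d - 1) + f d = ∑ k ∈ {1, 2, d - 1, d}, f k := by
        rw [sum_insert (by simp only [mem_insert, mem_singleton]; omega),
          sum_insert (by simp only [mem_insert, mem_singleton]; omega),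
          sum_insert (by simp only [mem_singleton]; omega), sum_singleton]
        simp only [add_assoc]
    _ ≤ ∑ k ∈ Icc 1 d, f k := sum_le_sum_of_subset hsub

lemma two_mul_oddDF_lt {d x y : ℕ} (hd : 4 ≤ d)
    (hx : (2 * d - 4) * oddDF (d - 1) < x) (hy : (2 * d - 6) * oddDF (d - 2) < y) :
    2 * oddDF d < oddDF d + 2 * oddDF (d - 1) + 3 * y + x := by
  obtain ⟨m, rfl⟩ : ∃ m, d = m + 4 := ⟨d - 4, by omega⟩
  simp only [show m + 4 - 1 = m + 3 by omega, show m + 4 - 2 = m + 2 by omega,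
    show 2 * (m + 4) - 4 = 2 * m + 4 by omega, show 2 * (m + 4) - 6 = 2 * m + 2 by omega] at hx hy ⊢
  have h4 : oddDF (m + 4) = oddDF (m + 2) * (2 * m + 5) * (2 * m + 7) := by
    rw [oddDF_succ, oddDF_succ]; ring
  have h3 : oddDF (m + 3) = oddDF (m + 2) * (2 * m + 5) := oddDF_succ _
  rw [h3] at hx
  rw [h4, h3]
  nlinarith [oddDF_pos (m + 2)]

lemma oddDF_succ_sub_lt {d S : ℕ} (hd : 1 ≤ d) (hS : 2 * oddDF d < S) :
    oddDF (d + 1) - S < (2 * d - 1) * oddDF d := by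
  have hsplit : oddDF (d + 1) = (2 * d - 1) * oddDF d + 2 * oddDF d := by
    rw [oddDF_succ, ← add_mul, mul_comm]
    congr 1
    omega
  have hpos : 0 < (2 * d - 1) * oddDF d := Nat.mul_pos (by omega) (oddDF_pos d)
  omega

/-- Inductive step of the upper bound: for `d ≥ 5`, if `a(1)=1`, `a(2)=2`,
`a(d) > (2d-4)(2d-3)!!`, `a(d-1) > (2d-6)(2d-5)!!`, and
`a(d+1) = (2d+1)!! − ∑_{k=1}^{d}(2d-2k+1)!!·a(k)`, then `a(d+1) < (2d-1)·(2d-1)!!`. -/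
theorem a_upper_inductive_step (a : ℕ → ℕ) (d : ℕ) (hd : 5 ≤ d)
    (h1 : a 1 = 1) (h2 : a 2 = 2)
    (had : (2 * d - 4) * oddDF (d - 1) < a d)
    (had1 : (2 * d - 6) * oddDF (d - 2) < a (d - 1))
    (hrec : a (d + 1) = oddDF (d + 1) - ∑ k ∈ Finset.Icc 1 d, oddDF (d - k + 1) * a k) :
    a (d + 1) < (2 * d - 1) * oddDF d := by
  have hterms := add_add_add_le_sum_Icc_one (fun k => oddDF (d - k + 1) * a k) (by omega : 4 ≤ d)
  simp only [h1, h2, show d - 1 + 1 = d by omega, show d - 2 + 1 = d - 1 by omega,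
    show d - (d - 1) + 1 = 2 by omega, Nat.sub_self, zero_add, show oddDF 2 = 3 from rfl,
    show oddDF 1 = 1 from rfl] at hterms
  rw [hrec]
  apply oddDF_succ_sub_lt (by omega)
  calc 2 * oddDF d < oddDF d + 2 * oddDF (d - 1) + 3 * a (d - 1) + a d :=
        two_mul_oddDF_lt (by omega) had had1
    _ ≤ _ := by linarith
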